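/- arXiv:2510.23100 — 6 statements merged into one kernel-verified Lean document; each statement's English description precedes it below -/
import Mathlib

section
/- Let X be a Banach space and G a group acting on X by linear isometries such that the action is almost transitive, i.e., for every x, y in the unit sphere of X and every ε > 0 there exists g ∈ G with ‖g·x − y‖ < ε. Then every bounded G-invariant subset C of X is very weakly G-dentable: for every ε > 0 there exists x ∈ C such that x does not belong to the closed convex hull of C \ (G · B_ε(x)), where G · B_ε(x) = {g·y : g ∈ G, ‖y − x‖ < ε}. -/
/-- In a Banach space with an almost transitive linear isometric group
action, every nonempty bounded `G`-invariant subset is very weakly `G`-dentable. -/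
theorem stmt0 {G X : Type*} [Group G] [NormedAddCommGroup X] [NormedSpace ℝ X]
    [CompleteSpace X] [MulAction G X]
    (hlin : ∀ g : G, IsLinearMap ℝ (fun x : X => g • x))
    (hnorm : ∀ (g : G) (x : X), ‖g • x‖ = ‖x‖)
    (htrans : ∀ x y : X, ‖x‖ = 1 → ‖y‖ = 1 → ∀ ε > 0, ∃ g : G, ‖g • x - y‖ < ε)
    (C : Set X) (hCne : C.Nonempty) (hCb : Bornology.IsBounded C)
    (hCinv : ∀ g : G, (fun x : X => g • x) '' C ⊆ C) :
    ∀ ε > 0, ∃ x ∈ C,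
      x ∉ closure (convexHull ℝ (C \ ⋃ g : G, (fun y : X => g • y) '' Metric.ball x ε)) := by
  intro ε hε
  obtain ⟨R, hR⟩ := isBounded_iff_forall_norm_le.1 hCb
  set M := sSup (norm '' C) with hM
  have hbdd : BddAbove (norm '' C) := ⟨R, by rintro _ ⟨y, hy, rfl⟩; exact hR y hy⟩
  have hne : (norm '' C).Nonempty := hCne.image _
  have hle : ∀ y ∈ C, ‖y‖ ≤ M := fun y hy => le_csSup hbdd ⟨y, hy, rfl⟩
  by_cases hcase : M ≤ ε / 3
  · obtain ⟨x, hx⟩ := hCne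
    refine ⟨x, hx, ?_⟩
    have hempty : C \ (⋃ g : G, (fun y : X => g • y) '' Metric.ball x ε) = ∅ := by
      ext y
      simp only [Set.mem_diff, Set.mem_iUnion, Set.mem_image, Set.mem_empty_iff_false,
        iff_false, not_and, not_not]
      intro hy
      refine ⟨1, y, ?_, one_smul _ _⟩
      rw [Metric.mem_ball, dist_eq_norm]
      calc ‖y - x‖ ≤ ‖y‖ + ‖x‖ := norm_sub_le _ _
        _ ≤ M + M := add_le_add (hle y hy) (hle x hx)
        _ < ε := by linarith
    rw [hempty]
    simp [convexHull_empty]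
  · push_neg at hcase
    obtain ⟨_, ⟨x, hxC, rfl⟩, hx⟩ := exists_lt_of_lt_csSup hne (show M - ε / 6 < M by linarith)
    have hx0 : (0 : ℝ) < ‖x‖ := by linarith
    refine ⟨x, hxC, fun hmem => ?_⟩
    have hsub : C \ (⋃ g : G, (fun y : X => g • y) '' Metric.ball x ε)
        ⊆ Metric.closedBall (0 : X) (M - ε / 6) := by
      rintro y ⟨hyC, hynot⟩
      rw [Metric.mem_closedBall, dist_zero_right]
      by_contra hy2
      push_neg at hy2
      have hy0 : (0 : ℝ) < ‖y‖ := by linarith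
      have hxu : ‖(‖x‖⁻¹ : ℝ) • x‖ = 1 := by
        rw [norm_smul, norm_inv, norm_norm, inv_mul_cancel₀ hx0.ne']
      have hyu : ‖(‖y‖⁻¹ : ℝ) • y‖ = 1 := by
        rw [norm_smul, norm_inv, norm_norm, inv_mul_cancel₀ hy0.ne']
      obtain ⟨g, hg⟩ := htrans _ _ hxu hyu (ε / (3 * ‖x‖)) (by positivity)
      have hlinmap := hlin g
      have key : ‖g • x - (‖x‖ * ‖y‖⁻¹) • y‖ < ε / 3 := by
        have h1 : g • x - (‖x‖ * ‖y‖⁻¹) • y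
            = ‖x‖ • (g • ((‖x‖⁻¹ : ℝ) • x) - (‖y‖⁻¹ : ℝ) • y) := by
          rw [hlinmap.map_smul, smul_sub, smul_smul, smul_smul, mul_inv_cancel₀ hx0.ne', one_smul]
        rw [h1, norm_smul, norm_norm]
        calc ‖x‖ * ‖g • ((‖x‖⁻¹ : ℝ) • x) - (‖y‖⁻¹ : ℝ) • y‖
            < ‖x‖ * (ε / (3 * ‖x‖)) := by
              exact mul_lt_mul_of_pos_left hg hx0
          _ = ε / 3 := by field_simp
      have key2 : ‖(‖x‖ * ‖y‖⁻¹) • y - y‖ < ε / 6 := by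
        have h2 : (‖x‖ * ‖y‖⁻¹) • y - y = (‖x‖ * ‖y‖⁻¹ - 1) • y := by
          rw [sub_smul, one_smul]
        rw [h2, norm_smul, Real.norm_eq_abs]
        have h3 : |‖x‖ * ‖y‖⁻¹ - 1| * ‖y‖ = |‖x‖ - ‖y‖| := by
          have h4 : ‖x‖ - ‖y‖ = (‖x‖ * ‖y‖⁻¹ - 1) * ‖y‖ := by field_simp
          rw [h4, abs_mul, abs_of_nonneg hy0.le]
        rw [h3]
        have hxM : ‖x‖ ≤ M := hle x hxC
        have hyM : ‖y‖ ≤ M := hle y hyC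
        rw [abs_sub_lt_iff]
        constructor <;> linarith
      have hgxy : ‖g • x - y‖ < ε := by
        calc ‖g • x - y‖ ≤ ‖g • x - (‖x‖ * ‖y‖⁻¹) • y‖ + ‖(‖x‖ * ‖y‖⁻¹) • y - y‖ :=
              norm_sub_le_norm_sub_add_norm_sub _ _ _
          _ < ε / 3 + ε / 6 := add_lt_add key key2
          _ < ε := by linarith
      apply hynot
      simp only [Set.mem_iUnion, Set.mem_image]
      refine ⟨g, g⁻¹ • y, ?_, smul_inv_smul g y⟩
      rw [Metric.mem_ball, dist_eq_norm]
      have : ‖g⁻¹ • y - x‖ = ‖g • (g⁻¹ • y - x)‖ := (hnorm g _).symm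
      rw [this, hlinmap.map_sub, smul_inv_smul, ← norm_sub_rev]
      exact hgxy
    have hclose : closure (convexHull ℝ (C \ ⋃ g : G, (fun y : X => g • y) '' Metric.ball x ε))
        ⊆ Metric.closedBall (0 : X) (M - ε / 6) :=
      closure_minimal (convexHull_min hsub (convex_closedBall _ _)) Metric.isClosed_closedBall
    have := hclose hmem
    rw [Metric.mem_closedBall, dist_zero_right] at this
    linarith
end

section
/- Let G be a group acting by linear isometries on a Banach space X and let D ⊆ X be a G-invariant subset. If the closed convex hull of D is G-dentable, then D is G-dentable. Here a G-invariant set C is G-dentable if for every ε > 0 there exists a finite set {x₁,…,xₙ} ⊆ X and a point x ∈ C such that x is not in the smallest closed convex G-invariant set containing C \ ⋃ᵢ B_ε(xᵢ). -/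
/-- The smallest closed convex `G`-invariant subset containing `A`, i.e. the closed
convex hull of `G · A`. -/
def coG (G : Type*) {X : Type*} [Group G] [NormedAddCommGroup X] [NormedSpace ℝ X]
    [MulAction G X] (A : Set X) : Set X :=
  closure (convexHull ℝ (⋃ g : G, (fun x : X => g • x) '' A))

/-- A `G`-invariant set `C` is `G`-dentable: for every `ε > 0` there is a finite set of
points of `X` and a point `x ∈ C` with `x` not in the smallest closed convex
`G`-invariant set containing `C` minus the `ε`-balls around the chosen points. -/
def GDentable (G : Type*) {X : Type*} [Group G] [NormedAddCommGroup X] [NormedSpace ℝ X]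
    [MulAction G X] (C : Set X) : Prop :=
  ∀ ε > 0, ∃ s : Finset X, ∃ x ∈ C,
    x ∉ coG G (C \ ⋃ y ∈ (s : Set X), Metric.ball y ε)

theorem coG_mono (G : Type*) {X : Type*} [Group G] [NormedAddCommGroup X] [NormedSpace ℝ X]
    [MulAction G X] {A B : Set X} (hAB : A ⊆ B) : coG G A ⊆ coG G B :=
  closure_mono (convexHull_mono (Set.iUnion_mono fun _ => Set.image_mono hAB))

theorem subset_coG (G : Type*) {X : Type*} [Group G] [NormedAddCommGroup X] [NormedSpace ℝ X]
    [MulAction G X] (A : Set X) : A ⊆ coG G A := fun a ha =>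
  subset_closure (subset_convexHull ℝ _
    (Set.mem_iUnion.2 ⟨1, ⟨a, ha, one_smul G a⟩⟩))

/-- if the closed convex hull of a `G`-invariant set `D` is `G`-dentable,
then so is `D`. -/
theorem stmt2 {G X : Type*} [Group G] [NormedAddCommGroup X] [NormedSpace ℝ X]
    [CompleteSpace X] [MulAction G X]
    (hlin : ∀ g : G, IsLinearMap ℝ (fun x : X => g • x))
    (hnorm : ∀ (g : G) (x : X), ‖g • x‖ = ‖x‖)
    (D : Set X) (hDinv : ∀ g : G, (fun x : X => g • x) '' D ⊆ D)
    (h : GDentable G (closure (convexHull ℝ D))) :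
    GDentable G D := by
  intro ε hε
  obtain ⟨s, x, hxC, hx⟩ := h ε hε
  set C := closure (convexHull ℝ D) with hC
  set U := ⋃ y ∈ (s : Set X), Metric.ball y ε with hU
  refine ⟨s, ?_⟩
  by_contra hcon
  push_neg at hcon
  -- so D ⊆ coG G (D \ U)
  have hDM : D ⊆ coG G (D \ U) := fun d hd => hcon d hd
  have hMconv : Convex ℝ (coG G (D \ U)) := (convex_convexHull ℝ _).closure
  have hCM : C ⊆ coG G (D \ U) :=
    closure_minimal (convexHull_min hDM hMconv) isClosed_closure
  have hDC : D ⊆ C := fun d hd => subset_closure (subset_convexHull ℝ _ hd)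
  exact hx (coG_mono G (Set.diff_subset_diff_left hDC) (hCM hxC))
end

section
/- Let G be a topological group acting continuously by linear isometries on Banach spaces X and Y, and suppose there exists x₀ in the closed unit ball of X such that the closed convex hull of the orbit G·x₀ equals the whole closed unit ball B_X. Then every G-equivariant bounded linear operator T : X → Y attains its norm at x₀, i.e., ‖T(x₀)‖ = ‖T‖. -/
/-!
The ball `‖T x‖ ≤ ‖T x₀‖` pulls back under `T` to a closed convex set containing the orbit
`G • x₀`, because `T` is equivariant and `G` acts isometrically on `Y`. It therefore contains
the closed convex hull of the orbit, which is the unit ball of `X`, so `‖T‖ ≤ ‖T x₀‖`.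
-/

open Metric

namespace ContinuousLinearMap

variable {E F : Type*} [NormedAddCommGroup E] [NormedSpace ℝ E]
  [NormedAddCommGroup F] [NormedSpace ℝ F]

theorem closure_convexHull_subset_preimage_closedBall (T : E →L[ℝ] F) {s : Set E} {c : ℝ}
    (h : ∀ x ∈ s, ‖T x‖ ≤ c) : closure (convexHull ℝ s) ⊆ T ⁻¹' closedBall 0 c := by
  rw [← closedConvexHull_eq_closure_convexHull]
  refine closedConvexHull_min (fun x hx => by simpa using h x hx) ?_ ?_
  · exact (convex_closedBall 0 c).linear_preimage T.toLinearMap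
  · exact isClosed_closedBall.preimage T.continuous

theorem opNorm_le_of_closedBall_subset_closure_convexHull (T : E →L[ℝ] F) {s : Set E} {c : ℝ}
    (hs : closedBall 0 1 ⊆ closure (convexHull ℝ s)) (h : ∀ x ∈ s, ‖T x‖ ≤ c) : ‖T‖ ≤ c := by
  have hball := hs.trans (T.closure_convexHull_subset_preimage_closedBall h)
  have hc : 0 ≤ c := by simpa using hball (mem_closedBall_self zero_le_one)
  exact opNorm_le_of_unit_norm hc fun x hx => by
    simpa using hball (mem_closedBall_zero_iff.2 hx.le)

end ContinuousLinearMap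

theorem stmt14_general {G X Y : Type*} [Group G]
    [NormedAddCommGroup X] [NormedSpace ℝ X]
    [NormedAddCommGroup Y] [NormedSpace ℝ Y]
    [MulAction G X] [MulAction G Y]
    (hnormY : ∀ (g : G) (y : Y), ‖g • y‖ = ‖y‖)
    (x₀ : X) (hx₀ball : ‖x₀‖ ≤ 1)
    (hbig : closure (convexHull ℝ (Set.range fun g : G => g • x₀)) =
      Metric.closedBall (0 : X) 1)
    (T : X →L[ℝ] Y) (hT : ∀ (g : G) (x : X), T (g • x) = g • T x) :
    ‖T x₀‖ = ‖T‖ := by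
  refine le_antisymm ((T.le_opNorm x₀).trans (mul_le_of_le_one_right T.opNorm_nonneg hx₀ball)) ?_
  refine T.opNorm_le_of_closedBall_subset_closure_convexHull hbig.ge ?_
  rintro _ ⟨g, rfl⟩
  rw [hT, hnormY]

/-- if `x₀` is a big point (the closed convex hull of its `G`-orbit is
the whole closed unit ball), then every `G`-equivariant bounded linear operator
attains its norm at `x₀`. -/
theorem stmt14 {G X Y : Type*} [Group G] [TopologicalSpace G] [IsTopologicalGroup G]
    [NormedAddCommGroup X] [NormedSpace ℝ X] [CompleteSpace X]
    [NormedAddCommGroup Y] [NormedSpace ℝ Y] [CompleteSpace Y]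
    [MulAction G X] [ContinuousSMul G X] [MulAction G Y] [ContinuousSMul G Y]
    (hlinX : ∀ g : G, IsLinearMap ℝ (fun x : X => g • x))
    (hnormX : ∀ (g : G) (x : X), ‖g • x‖ = ‖x‖)
    (hlinY : ∀ g : G, IsLinearMap ℝ (fun y : Y => g • y))
    (hnormY : ∀ (g : G) (y : Y), ‖g • y‖ = ‖y‖)
    (x₀ : X) (hx₀ball : ‖x₀‖ ≤ 1)
    (hbig : closure (convexHull ℝ (Set.range fun g : G => g • x₀)) =
      Metric.closedBall (0 : X) 1)
    (T : X →L[ℝ] Y) (hT : ∀ (g : G) (x : X), T (g • x) = g • T x) :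
    ‖T x₀‖ = ‖T‖ :=
  stmt14_general hnormY x₀ hx₀ball hbig T hT
end

section
/- Let X be an almost-transitive Banach space, i.e., for every x, y in the unit sphere and ε > 0 there is a surjective linear isometry U of X with ‖U(x) − y‖ < ε. Let C ⊆ X be a nonempty bounded closed convex subset invariant under all surjective linear isometries of X. Then C = r·B_X for some r ≥ 0, where B_X is the closed unit ball. -/
/-- in an almost-transitive Banach space, every nonempty bounded closed
convex subset invariant under all surjective linear isometries is a closed ball
centered at the origin. -/
theorem stmt15 {X : Type*} [NormedAddCommGroup X] [NormedSpace ℝ X] [CompleteSpace X]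
    (htrans : ∀ x y : X, ‖x‖ = 1 → ‖y‖ = 1 → ∀ ε > 0,
      ∃ U : X ≃ₗᵢ[ℝ] X, ‖U x - y‖ < ε)
    (C : Set X) (hCne : C.Nonempty) (hCbd : Bornology.IsBounded C)
    (hCcl : IsClosed C) (hCconv : Convex ℝ C)
    (hCinv : ∀ U : X ≃ₗᵢ[ℝ] X, U '' C ⊆ C) :
    ∃ r : ℝ, 0 ≤ r ∧ C = Metric.closedBall (0 : X) r := by
  obtain ⟨M, hM⟩ := hCbd.exists_norm_le
  set S : Set ℝ := (fun c => ‖c‖) '' C with hS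
  have hSne : S.Nonempty := hCne.image _
  have hSbdd : BddAbove S := ⟨M, by rintro s ⟨c, hc, rfl⟩; exact hM c hc⟩
  set r : ℝ := sSup S with hr
  -- 0 ∈ C
  have h0C : (0 : X) ∈ C := by
    obtain ⟨c₀, hc₀⟩ := hCne
    have hneg : -c₀ ∈ C := hCinv (LinearIsometryEquiv.neg ℝ) ⟨c₀, hc₀, rfl⟩
    have := hCconv hc₀ hneg (by norm_num : (0:ℝ) ≤ 1/2) (by norm_num : (0:ℝ) ≤ 1/2)
      (by norm_num)
    simpa [smul_neg] using this
  have hr0 : 0 ≤ r := by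
    have : (0:ℝ) ∈ S := ⟨0, h0C, norm_zero⟩
    simpa using le_csSup hSbdd this
  -- sphere points
  have hsphere : ∀ c ∈ C, ∀ y : X, ‖y‖ = 1 → ‖c‖ • y ∈ C := by
    intro c hc y hy
    by_cases hc0 : c = 0
    · simpa [hc0] using h0C
    have hcn : (0:ℝ) < ‖c‖ := norm_pos_iff.2 hc0
    have : ‖c‖ • y ∈ closure C := by
      rw [Metric.mem_closure_iff]
      intro ε hε
      obtain ⟨U, hU⟩ := htrans (‖c‖⁻¹ • c) y (by
        rw [norm_smul, norm_inv, norm_norm, inv_mul_cancel₀ hcn.ne']) hy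
        (ε / ‖c‖) (div_pos hε hcn)
      refine ⟨U c, hCinv U ⟨c, hc, rfl⟩, ?_⟩
      have hUc : U c = ‖c‖ • U (‖c‖⁻¹ • c) := by
        rw [map_smul, smul_smul, mul_inv_cancel₀ hcn.ne', one_smul]
      rw [dist_eq_norm', hUc, ← smul_sub, norm_smul, Real.norm_of_nonneg hcn.le]
      calc ‖c‖ * ‖U (‖c‖⁻¹ • c) - y‖ < ‖c‖ * (ε / ‖c‖) := by
            exact (mul_lt_mul_iff_right₀ hcn).2 hU
        _ = ε := by field_simp
    rwa [hCcl.closure_eq] at this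
  -- interior of ball in C
  have hball : ∀ x : X, x ≠ 0 → ∀ t : ℝ, 0 < t → t < 1 → ‖x‖ ≤ r → t • x ∈ C := by
    intro x hx t ht ht1 hxr
    have hxn : (0:ℝ) < ‖x‖ := norm_pos_iff.2 hx
    have hs : t * ‖x‖ < r := lt_of_lt_of_le (by nlinarith) hxr
    obtain ⟨s, ⟨c, hc, rfl⟩, hcs⟩ := exists_lt_of_lt_csSup hSne hs
    have hcn : (0:ℝ) < ‖c‖ := lt_trans (by positivity) hcs
    have hz : ‖c‖ • (‖x‖⁻¹ • x) ∈ C :=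
      hsphere c hc _ (by rw [norm_smul, norm_inv, norm_norm, inv_mul_cancel₀ hxn.ne'])
    set a : ℝ := t * ‖x‖ / ‖c‖ with ha
    have ha0 : 0 ≤ a := by positivity
    have ha1 : a ≤ 1 := by
      rw [ha, div_le_one hcn]; exact hcs.le
    have := hCconv hz h0C ha0 (by linarith : 0 ≤ 1 - a) (by ring)
    have heq : a • (‖c‖ • ‖x‖⁻¹ • x) + (1 - a) • (0:X) = t • x := by
      rw [smul_zero, add_zero, smul_smul, smul_smul, ha]
      congr 1
      field_simp
    rwa [heq] at this
  refine ⟨r, hr0, ?_⟩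
  apply Set.Subset.antisymm
  · intro c hc
    rw [Metric.mem_closedBall, dist_zero_right]
    exact le_csSup hSbdd ⟨c, hc, rfl⟩
  · intro x hx
    rw [Metric.mem_closedBall, dist_zero_right] at hx
    by_cases hx0 : x = 0
    · simpa [hx0] using h0C
    have hxn : (0:ℝ) < ‖x‖ := norm_pos_iff.2 hx0
    have : x ∈ closure C := by
      rw [Metric.mem_closure_iff]
      intro ε hε
      set t : ℝ := 1 - min (1/2) (ε / (2 * ‖x‖)) with htdef
      have hmin0 : 0 < min (1/2) (ε / (2 * ‖x‖)) := lt_min (by norm_num) (by positivity)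
      have hminhalf : min (1/2) (ε / (2 * ‖x‖)) ≤ 1/2 := min_le_left _ _
      have ht0 : 0 < t := by simp only [htdef]; linarith
      have ht1 : t < 1 := by simp only [htdef]; linarith
      refine ⟨t • x, hball x hx0 t ht0 ht1 hx, ?_⟩
      rw [dist_eq_norm, ← one_smul ℝ x, smul_smul, ← sub_smul, norm_smul]
      have h1 : (1:ℝ) - t * 1 = min (1/2) (ε / (2 * ‖x‖)) := by
        simp [htdef]
      rw [h1]
      have h2 : min (1/2) (ε / (2 * ‖x‖)) ≤ ε / (2 * ‖x‖) := min_le_right _ _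
      rw [Real.norm_of_nonneg hmin0.le]
      calc min (1/2) (ε / (2 * ‖x‖)) * ‖x‖ ≤ (ε / (2 * ‖x‖)) * ‖x‖ := by
            exact mul_le_mul_of_nonneg_right h2 hxn.le
        _ = ε / 2 := by field_simp
        _ < ε := by linarith
    rwa [hCcl.closure_eq] at this
end

section
/- Let G be a group acting by linear isometries on Banach spaces X and Y, and suppose the quotient pseudometric space B_X // G (orbit closures of points of the closed unit ball with the infimum distance D(Ḡx, Ḡy) = inf_{g∈G} ‖x − g·y‖) is compact. Then every G-equivariant bounded linear operator T : X → Y attains its norm: there exists x in the closed unit ball of X with ‖Tx‖ = ‖T‖. -/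
/-- if the orbit-closure space `B_X // G` with the infimum distance
`D(Ḡx, Ḡy) = inf_g ‖x - g·y‖` is compact (expressed via sequential compactness of the
closed unit ball for this pseudometric), then every `G`-equivariant bounded linear
operator `T : X → Y` attains its norm. -/
theorem stmt16 {G X Y : Type*} [Group G]
    [NormedAddCommGroup X] [NormedSpace ℝ X] [CompleteSpace X]
    [NormedAddCommGroup Y] [NormedSpace ℝ Y] [CompleteSpace Y]
    [MulAction G X] [MulAction G Y]
    (hlinX : ∀ g : G, IsLinearMap ℝ (fun x : X => g • x))
    (hnormX : ∀ (g : G) (x : X), ‖g • x‖ = ‖x‖)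
    (hlinY : ∀ g : G, IsLinearMap ℝ (fun y : Y => g • y))
    (hnormY : ∀ (g : G) (y : Y), ‖g • y‖ = ‖y‖)
    (hcompact : ∀ u : ℕ → X, (∀ n, ‖u n‖ ≤ 1) →
      ∃ x : X, ‖x‖ ≤ 1 ∧ ∃ φ : ℕ → ℕ, StrictMono φ ∧
        Filter.Tendsto (fun n => ⨅ g : G, ‖u (φ n) - g • x‖)
          Filter.atTop (nhds 0))
    (T : X →L[ℝ] Y) (hT : ∀ (g : G) (x : X), T (g • x) = g • T x) :
    ∃ x : X, ‖x‖ ≤ 1 ∧ ‖T x‖ = ‖T‖ := by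
  -- choose an almost-maximizing sequence
  have hu : ∀ n : ℕ, ∃ v : X, ‖v‖ ≤ 1 ∧ ‖T‖ - 1 / (n + 1) ≤ ‖T v‖ := by
    intro n
    have h1 : ‖T‖ - 1 / (n + 1 : ℝ) < ‖T‖ := by
      have : (0 : ℝ) < 1 / (n + 1) := by positivity
      linarith
    obtain ⟨v, hv1, hv2⟩ := T.exists_lt_apply_of_lt_opNorm h1
    exact ⟨v, hv1.le, hv2.le⟩
  choose u hu1 hu2 using hu
  obtain ⟨x, hx1, φ, hφ, htend⟩ := hcompact u hu1
  refine ⟨x, hx1, ?_⟩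
  have hle : ‖T x‖ ≤ ‖T‖ := T.unit_le_opNorm x hx1
  refine le_antisymm hle ?_
  -- key bound: ‖T (u (φ n))‖ ≤ ‖T‖ * (⨅ g, ‖u (φ n) - g • x‖) + ‖T x‖
  have key : ∀ n, ‖T (u (φ n))‖ ≤ ‖T‖ * (⨅ g : G, ‖u (φ n) - g • x‖) + ‖T x‖ := by
    intro n
    have h3 : (0:ℝ) ≤ ⨅ g : G, ‖u (φ n) - g • x‖ :=
      le_ciInf fun g => norm_nonneg _
    have hstep : ∀ g : G, ‖T (u (φ n))‖ ≤ ‖T‖ * ‖u (φ n) - g • x‖ + ‖T x‖ := by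
      intro g
      have h1 : ‖T (u (φ n)) - g • T x‖ ≤ ‖T‖ * ‖u (φ n) - g • x‖ := by
        calc ‖T (u (φ n)) - g • T x‖ = ‖T (u (φ n) - g • x)‖ := by
              rw [map_sub, hT]
          _ ≤ ‖T‖ * ‖u (φ n) - g • x‖ := T.le_opNorm _
      calc ‖T (u (φ n))‖ ≤ ‖T (u (φ n)) - g • T x‖ + ‖g • T x‖ := by
            simpa using norm_add_le (T (u (φ n)) - g • T x) (g • T x)
        _ = ‖T (u (φ n)) - g • T x‖ + ‖T x‖ := by rw [hnormY]
        _ ≤ ‖T‖ * ‖u (φ n) - g • x‖ + ‖T x‖ := by linarith [h1]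
    rcases eq_or_lt_of_le (norm_nonneg T) with hT0 | hTpos
    · have h4 : ‖T (u (φ n))‖ ≤ ‖T x‖ := by
        have := hstep 1
        nlinarith [norm_nonneg (u (φ n) - (1:G) • x)]
      nlinarith
    · by_contra hcon
      push_neg at hcon
      have h2 : (⨅ g : G, ‖u (φ n) - g • x‖) < (‖T (u (φ n))‖ - ‖T x‖) / ‖T‖ := by
        rw [lt_div_iff₀ hTpos]
        nlinarith
      obtain ⟨g, hg⟩ := exists_lt_of_ciInf_lt h2
      rw [lt_div_iff₀ hTpos] at hg
      nlinarith [hstep g]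
  -- take limits
  have hlhs : Filter.Tendsto (fun n => ‖T‖ - 1 / ((φ n : ℝ) + 1)) Filter.atTop (nhds ‖T‖) := by
    have h1 : Filter.Tendsto (fun n => 1 / ((φ n : ℝ) + 1)) Filter.atTop (nhds 0) := by
      apply Filter.Tendsto.comp tendsto_one_div_add_atTop_nhds_zero_nat
      exact hφ.tendsto_atTop
    simpa using (tendsto_const_nhds (x := ‖T‖)).sub h1
  have hrhs : Filter.Tendsto (fun n => ‖T‖ * (⨅ g : G, ‖u (φ n) - g • x‖) + ‖T x‖)
      Filter.atTop (nhds ‖T x‖) := by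
    have := (htend.const_mul ‖T‖).add (tendsto_const_nhds (x := ‖T x‖))
    simpa using this
  exact le_of_tendsto_of_tendsto' hlhs hrhs fun n => le_trans (hu2 (φ n)) (key n)
end

section
/- Let (eₙ) be the standard basis of ℓ¹(ℕ), Y a Banach space, T : ℓ¹ → Y a bounded operator, ε ∈ (0,1), and I ⊆ ℕ a nonempty proper subset such that ‖Teᵢ‖ is constant for i ∈ I and ‖Te_{i₀}‖ > ‖T‖ − ε‖T‖/2 for some i₀ ∈ I. Let P : ℓ¹ → ℓ¹ be the coordinate projection onto the coordinates in I, and set S = T + ε·(T ∘ P). Then ‖S − T‖ ≤ ε‖T‖, and S attains its norm at e_{i₀}. -/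
/-!
On `ℓ¹` the operator norm of `R` is `supₙ ‖R eₙ‖`, so it suffices to compare the values of
`S = T + ε (T ∘ P)` on basis vectors. For `i ∈ I` we have `S eᵢ = (1 + ε) T eᵢ`, all of norm
`(1 + ε) ‖T e_{i₀}‖`; for `j ∉ I`, `S eⱼ = T eⱼ` has norm at most `‖T‖`, which the lower bound on
`‖T e_{i₀}‖` puts below `(1 + ε) ‖T e_{i₀}‖`. The estimate `‖S - T‖ ≤ ε ‖T‖` is `‖P‖ ≤ 1`.
-/

/-- The standard basis vectors of `ℓ¹(ℕ)`. -/
noncomputable def e (n : ℕ) : lp (fun _ : ℕ => ℝ) 1 := lp.single 1 n (1 : ℝ)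

section

variable {ι 𝕜 Y : Type*} [DecidableEq ι] [NontriviallyNormedField 𝕜]
  [NormedAddCommGroup Y] [NormedSpace 𝕜 Y]

theorem lp.single_one_eq_smul (x : lp (fun _ : ι => 𝕜) 1) (i : ι) :
    lp.single 1 i (x i) = x i • (lp.single 1 i 1 : lp (fun _ : ι => 𝕜) 1) := by
  rw [← lp.single_smul, smul_eq_mul, mul_one]

theorem ContinuousLinearMap.opNorm_le_of_forall_single_le
    (R : lp (fun _ : ι => 𝕜) 1 →L[𝕜] Y) {C : ℝ} (hC : 0 ≤ C)
    (h : ∀ i, ‖R (lp.single 1 i (1 : 𝕜))‖ ≤ C) : ‖R‖ ≤ C := by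
  refine R.opNorm_le_bound hC fun x => ?_
  have hx : HasSum (fun i => C * ‖x i‖) (C * ‖x‖) := by
    simpa using (lp.hasSum_norm (by norm_num) x).mul_left C
  have hRx : HasSum (fun i => x i • R (lp.single 1 i (1 : 𝕜))) (R x) := by
    simpa only [lp.single_one_eq_smul, map_smul] using
      (lp.hasSum_single ENNReal.one_ne_top x).mapL R
  refine hRx.norm_le_of_bounded hx fun i => ?_
  rw [norm_smul, mul_comm]
  exact mul_le_mul_of_nonneg_right (h i) (norm_nonneg _)

theorem ContinuousLinearMap.norm_apply_single_le_opNorm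
    (R : lp (fun _ : ι => 𝕜) 1 →L[𝕜] Y) (i : ι) : ‖R (lp.single 1 i (1 : 𝕜))‖ ≤ ‖R‖ := by
  simpa [lp.norm_single] using R.le_opNorm (lp.single 1 i 1)

theorem ContinuousLinearMap.norm_apply_single_eq_opNorm
    (R : lp (fun _ : ι => 𝕜) 1 →L[𝕜] Y) {i₀ : ι}
    (h : ∀ i, ‖R (lp.single 1 i (1 : 𝕜))‖ ≤ ‖R (lp.single 1 i₀ (1 : 𝕜))‖) :
    ‖R (lp.single 1 i₀ (1 : 𝕜))‖ = ‖R‖ :=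
  le_antisymm (R.norm_apply_single_le_opNorm i₀)
    (R.opNorm_le_of_forall_single_le (norm_nonneg _) h)

def IsCoordProjection (I : Set ι) (P : lp (fun _ : ι => 𝕜) 1 →L[𝕜] lp (fun _ : ι => 𝕜) 1) :
    Prop :=
  ∀ x i, P x i = I.indicator (fun j => x j) i

namespace IsCoordProjection

variable {I : Set ι} {P : lp (fun _ : ι => 𝕜) 1 →L[𝕜] lp (fun _ : ι => 𝕜) 1}

theorem apply_single_of_mem (hP : IsCoordProjection I P) {i : ι} (hi : i ∈ I) (a : 𝕜) :
    P (lp.single 1 i a) = lp.single 1 i a := by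
  ext j
  rw [hP]
  by_cases hj : j ∈ I
  · exact Set.indicator_of_mem hj _
  · rw [Set.indicator_of_notMem hj, lp.single_apply_ne _ _ _ (ne_of_mem_of_not_mem hi hj).symm]

theorem apply_single_of_notMem (hP : IsCoordProjection I P) {i : ι} (hi : i ∉ I) (a : 𝕜) :
    P (lp.single 1 i a) = 0 := by
  ext j
  rw [hP]
  by_cases hj : j ∈ I
  · rw [Set.indicator_of_mem hj, lp.single_apply_ne _ _ _ (ne_of_mem_of_not_mem hj hi)]; rfl
  · exact Set.indicator_of_notMem hj _

theorem opNorm_le_one (hP : IsCoordProjection I P) : ‖P‖ ≤ 1 := by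
  refine P.opNorm_le_of_forall_single_le zero_le_one fun i => ?_
  by_cases hi : i ∈ I
  · simp [hP.apply_single_of_mem hi, lp.norm_single]
  · simp [hP.apply_single_of_notMem hi]

theorem add_smul_comp_apply_single_of_mem (hP : IsCoordProjection I P)
    (T : lp (fun _ : ι => 𝕜) 1 →L[𝕜] Y) (ε : 𝕜) {i : ι} (hi : i ∈ I) :
    (T + ε • T.comp P) (lp.single 1 i (1 : 𝕜)) = (1 + ε) • T (lp.single 1 i (1 : 𝕜)) := by
  simp [hP.apply_single_of_mem hi, add_smul]

theorem add_smul_comp_apply_single_of_notMem (hP : IsCoordProjection I P)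
    (T : lp (fun _ : ι => 𝕜) 1 →L[𝕜] Y) (ε : 𝕜) {i : ι} (hi : i ∉ I) :
    (T + ε • T.comp P) (lp.single 1 i (1 : 𝕜)) = T (lp.single 1 i (1 : 𝕜)) := by
  simp [hP.apply_single_of_notMem hi]

end IsCoordProjection

end

theorem stmt18_general {Y : Type*} [NormedAddCommGroup Y] [NormedSpace ℝ Y]
    (T : lp (fun _ : ℕ => ℝ) 1 →L[ℝ] Y)
    (ε : ℝ) (hε : 0 < ε) (hε1 : ε < 1)
    (I : Set ℕ)
    (hconst : ∀ i ∈ I, ∀ j ∈ I, ‖T (e i)‖ = ‖T (e j)‖)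
    (i₀ : ℕ) (hi₀ : i₀ ∈ I)
    (hbig : ‖T (e i₀)‖ > ‖T‖ - ε * ‖T‖ / 2)
    (P : lp (fun _ : ℕ => ℝ) 1 →L[ℝ] lp (fun _ : ℕ => ℝ) 1)
    (hP : ∀ (x : lp (fun _ : ℕ => ℝ) 1) (i : ℕ),
      (P x : ∀ _ : ℕ, ℝ) i = Set.indicator I (fun j => (x : ∀ _ : ℕ, ℝ) j) i) :
    ‖(T + ε • (T.comp P)) - T‖ ≤ ε * ‖T‖ ∧
    ‖(T + ε • (T.comp P)) (e i₀)‖ = ‖T + ε • (T.comp P)‖ := by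
  replace hP : IsCoordProjection I P := hP
  constructor
  · calc ‖(T + ε • T.comp P) - T‖ = ε * ‖T.comp P‖ := by
          rw [add_sub_cancel_left, norm_smul, Real.norm_of_nonneg hε.le]
      _ ≤ ε * (‖T‖ * ‖P‖) := by gcongr; exact T.opNorm_comp_le P
      _ ≤ ε * ‖T‖ := by
          gcongr; exact mul_le_of_le_one_right (norm_nonneg T) hP.opNorm_le_one
  -- `(1 + ε)(1 - ε/2) ≥ 1` because `ε ≤ 1`
  have hT : ‖T‖ ≤ (1 + ε) * ‖T (e i₀)‖ := by
    nlinarith [mul_nonneg (mul_nonneg hε.le (sub_nonneg.2 hε1.le)) (norm_nonneg T)]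
  have hS : ‖(T + ε • T.comp P) (e i₀)‖ = (1 + ε) * ‖T (e i₀)‖ := by
    rw [e, hP.add_smul_comp_apply_single_of_mem T ε hi₀, norm_smul,
      Real.norm_of_nonneg (by linarith)]
  refine (T + ε • T.comp P).norm_apply_single_eq_opNorm fun n => ?_
  change _ ≤ ‖(T + ε • T.comp P) (e i₀)‖
  rw [hS]
  by_cases hn : n ∈ I
  · rw [hP.add_smul_comp_apply_single_of_mem T ε hn, norm_smul,
      Real.norm_of_nonneg (by linarith), ← e, hconst n hn i₀ hi₀]
  · rw [hP.add_smul_comp_apply_single_of_notMem T ε hn]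
    exact (T.norm_apply_single_le_opNorm n).trans hT

/-- given `T : ℓ¹ → Y`, `ε ∈ (0,1)`, a nonempty proper set `I ⊆ ℕ` on
which `‖T eᵢ‖` is constant with `‖T e_{i₀}‖ > ‖T‖ - ε‖T‖/2` for some `i₀ ∈ I`, and `P`
the coordinate projection onto `I`, the perturbation `S = T + ε (T ∘ P)` satisfies
`‖S - T‖ ≤ ε ‖T‖` and attains its norm at `e_{i₀}`. -/
theorem stmt18 {Y : Type*} [NormedAddCommGroup Y] [NormedSpace ℝ Y] [CompleteSpace Y]
    (T : lp (fun _ : ℕ => ℝ) 1 →L[ℝ] Y)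
    (ε : ℝ) (hε : 0 < ε) (hε1 : ε < 1)
    (I : Set ℕ) (hIne : I.Nonempty) (hIprop : I ≠ Set.univ)
    (hconst : ∀ i ∈ I, ∀ j ∈ I, ‖T (e i)‖ = ‖T (e j)‖)
    (i₀ : ℕ) (hi₀ : i₀ ∈ I)
    (hbig : ‖T (e i₀)‖ > ‖T‖ - ε * ‖T‖ / 2)
    (P : lp (fun _ : ℕ => ℝ) 1 →L[ℝ] lp (fun _ : ℕ => ℝ) 1)
    (hP : ∀ (x : lp (fun _ : ℕ => ℝ) 1) (i : ℕ),
      (P x : ∀ _ : ℕ, ℝ) i = Set.indicator I (fun j => (x : ∀ _ : ℕ, ℝ) j) i) :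
    ‖(T + ε • (T.comp P)) - T‖ ≤ ε * ‖T‖ ∧
    ‖(T + ε • (T.comp P)) (e i₀)‖ = ‖T + ε • (T.comp P)‖ :=
  stmt18_general T ε hε hε1 I hconst i₀ hi₀ hbig P hP
end
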